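/- In every reachable configuration of the compiled SCDS, for each pair of agents u ≠ v, the history s_v[u] (acts of u as seen by v) is a prefix of s_u[u] (u's own acts), and the messages in the store addressed to v authored by u are exactly the acts in s_u[u] not in s_v[u], in order. -/

import Mathlib

/-!
The two conjuncts together say that what `v` has seen of `u`, followed by the queue from `u`
to `v`, is exactly `u`'s own acts. This single equation is preserved by every step: an output
of `u` appends the same act to both sides, and a delivery moves the head of the queue to the
end of the receiver's history. That head was authored by `u`, because by the equation it
occurs among `u`'s own acts.
-/

/-- A compiled-SCDS configuration: each agent's state is its history (a list of acts
`(author, action)`), and the store keeps, per ordered pair `(sender, recipient)`,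
the FIFO queue of in-flight acts. -/
structure CConfig (V A : Type*) where
  hist : V → List (V × A)
  queue : V → V → List (V × A)

variable {V A : Type*}

/-- `h` restricted to acts authored by `u`. -/
def restrictH [DecidableEq V] (h : List (V × A)) (u : V) : List (V × A) :=
  h.filter (fun m => m.1 = u)

/-- A step of the compiled SCDS; `P v h a` is the enabling condition for agent `v`
with history `h` to output act `v(a)`. -/
def CStep [DecidableEq V] (P : V → List (V × A) → A → Prop)
    (c c' : CConfig V A) : Prop :=
  (∃ (v : V) (a : A), P v (c.hist v) a ∧
    c'.hist = Function.update c.hist v (c.hist v ++ [(v, a)]) ∧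
    c'.queue = fun x y => if x = v ∧ y ≠ v then c.queue x y ++ [(v, a)] else c.queue x y) ∨
  (∃ (u v : V) (m : V × A) (rest : List (V × A)), u ≠ v ∧
    c.queue u v = m :: rest ∧
    c'.hist = Function.update c.hist v (c.hist v ++ [m]) ∧
    c'.queue = fun x y => if x = u ∧ y = v then rest else c.queue x y)

/-- Reachability from the initial configuration (all histories empty, empty store). -/
def CReachable [DecidableEq V] (P : V → List (V × A) → A → Prop)
    (c : CConfig V A) : Prop :=
  Relation.ReflTransGen (CStep P) ⟨fun _ => [], fun _ _ => []⟩ c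

section

variable [DecidableEq V]

lemma restrictH_append_of_eq (h : List (V × A)) {m : V × A} {u : V}
    (hm : m.1 = u) : restrictH (h ++ [m]) u = restrictH h u ++ [m] := by
  simp [restrictH, List.filter_append, hm]

lemma restrictH_append_of_ne (h : List (V × A)) {m : V × A} {u : V}
    (hm : m.1 ≠ u) : restrictH (h ++ [m]) u = restrictH h u := by
  simp [restrictH, List.filter_append, hm]

lemma fst_eq_of_mem_restrictH {h : List (V × A)} {u : V} {m : V × A}
    (hm : m ∈ restrictH h u) : m.1 = u := by
  simpa [restrictH] using (List.mem_filter.mp hm).2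

def SeenAppendQueue (c : CConfig V A) : Prop :=
  ∀ u v, u ≠ v → restrictH (c.hist v) u ++ c.queue u v = restrictH (c.hist u) u

namespace SeenAppendQueue

theorem initial : SeenAppendQueue (⟨fun _ => [], fun _ _ => []⟩ : CConfig V A) :=
  fun _ _ _ => rfl

theorem fst_eq_of_mem_queue {c : CConfig V A} (hc : SeenAppendQueue c) {u v : V} (huv : u ≠ v)
    {m : V × A} (hm : m ∈ c.queue u v) : m.1 = u :=
  fst_eq_of_mem_restrictH (hc u v huv ▸ List.mem_append_right _ hm)

theorem output {c : CConfig V A} (hc : SeenAppendQueue c) (v : V) (a : A) :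
    SeenAppendQueue (⟨Function.update c.hist v (c.hist v ++ [(v, a)]),
      fun x y => if x = v ∧ y ≠ v then c.queue x y ++ [(v, a)] else c.queue x y⟩ :
        CConfig V A) := by
  intro u w huw
  simp only [Function.update_apply]
  by_cases hu : u = v
  · subst hu
    simp only [huw.symm, ne_eq, not_false_eq_true, and_self, if_false, if_true]
    rw [restrictH_append_of_eq _ rfl, ← hc u w huw, List.append_assoc]
  · have hvu : (v, a).1 ≠ u := Ne.symm hu
    simp only [hu, false_and, if_false]
    split_ifs with hw
    · subst hw
      rw [restrictH_append_of_ne _ hvu, hc u w huw]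
    · exact hc u w huw

theorem input {c : CConfig V A} (hc : SeenAppendQueue c) {u₀ v₀ : V} (hne : u₀ ≠ v₀)
    {m : V × A} {rest : List (V × A)} (hq : c.queue u₀ v₀ = m :: rest) :
    SeenAppendQueue (⟨Function.update c.hist v₀ (c.hist v₀ ++ [m]),
      fun x y => if x = u₀ ∧ y = v₀ then rest else c.queue x y⟩ : CConfig V A) := by
  have hm : m.1 = u₀ := hc.fst_eq_of_mem_queue hne (hq ▸ List.mem_cons_self)
  intro u w huw
  simp only [Function.update_apply]
  by_cases hw : w = v₀
  · subst hw
    simp only [huw, if_true, if_false, and_true]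
    by_cases hu : u = u₀
    · subst hu
      rw [if_pos rfl, restrictH_append_of_eq _ hm, List.append_assoc, List.singleton_append,
        ← hq, hc u w huw]
    · rw [if_neg hu, restrictH_append_of_ne _ (hm ▸ Ne.symm hu), hc u w huw]
  · simp only [hw, and_false, if_false]
    split_ifs with hu
    · subst hu
      rw [restrictH_append_of_ne _ (hm ▸ hne), hc u w huw]
    · exact hc u w huw

theorem of_reachable {P : V → List (V × A) → A → Prop} {c : CConfig V A}
    (hc : CReachable P c) : SeenAppendQueue c := by
  induction hc with
  | refl => exact initial
  | @tail _ c' _ hstep ih =>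
    obtain ⟨hist', queue'⟩ := c'
    rcases hstep with ⟨v, a, -, rfl, rfl⟩ | ⟨u₀, v₀, m, rest, hne, hq, rfl, rfl⟩
    · exact ih.output v a
    · exact ih.input hne hq

end SeenAppendQueue

end

/-- Invariant: for all `u ≠ v`, the acts of `u` seen by `v` form a prefix of `u`'s own
acts, and the in-flight queue from `u` to `v` is exactly the remaining suffix, in order. -/
theorem prefix_and_queue_invariant [DecidableEq V]
    (P : V → List (V × A) → A → Prop) (c : CConfig V A)
    (hc : CReachable P c) :
    ∀ u v : V, u ≠ v →
      restrictH (c.hist v) u <+: restrictH (c.hist u) u ∧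
      c.queue u v =
        (restrictH (c.hist u) u).drop (restrictH (c.hist v) u).length := by
  intro u v huv
  rw [← SeenAppendQueue.of_reachable hc u v huv]
  exact ⟨List.prefix_append _ _, List.drop_left.symm⟩
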